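/- arXiv:1906.05630 — 5 statements merged into one kernel-verified Lean document; each statement's English description precedes it below -/
import Mathlib

section
/- For every real a with a ≠ lπ for all integers l, and every real b, the series ∑_{k=0}^∞ |cos(a k + b)| / (k+1) diverges. -/
/-!
Writing `sin a = sin (x + a) cos x - cos (x + a) sin x` gives
`|cos x| + |cos (x + a)| ≥ |sin a| > 0`, so each pair of consecutive terms of the series is at
least `|sin a| / (k + 2)`, and the series dominates a multiple of the harmonic series.
-/

open Real

theorem Real.abs_sin_le_abs_cos_add_abs_cos_add (a x : ℝ) :
    |sin a| ≤ |cos x| + |cos (x + a)| := by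
  have hsin : sin a = sin (x + a) * cos x - cos (x + a) * sin x := by
    rw [← sin_sub, add_sub_cancel_left]
  calc |sin a| ≤ |sin (x + a)| * |cos x| + |cos (x + a)| * |sin x| := by
        rw [hsin, ← abs_mul, ← abs_mul]; exact abs_sub _ _
    _ ≤ 1 * |cos x| + |cos (x + a)| * 1 := by
        gcongr
        exacts [abs_sin_le_one _, abs_sin_le_one _]
    _ = |cos x| + |cos (x + a)| := by ring

theorem not_summable_of_div_le_add_succ {f : ℕ → ℝ} {c : ℝ} (hc : 0 < c)
    (h : ∀ k : ℕ, c / ((k : ℝ) + 2) ≤ f k + f (k + 1)) : ¬ Summable f := by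
  intro hf
  have hpairs : Summable fun k => f k + f (k + 1) := hf.add ((summable_nat_add_iff 1).2 hf)
  have hshifted : Summable fun k : ℕ => c / ((k : ℝ) + 2) :=
    hpairs.of_nonneg_of_le (fun k => by positivity) h
  have hharmonic : Summable fun n : ℕ => c / (n : ℝ) := by
    rw [← summable_nat_add_iff 2]
    simpa [add_assoc, one_add_one_eq_two] using hshifted
  refine Real.not_summable_one_div_natCast ((hharmonic.mul_left c⁻¹).congr fun n => ?_)
  field_simp

theorem cos_series_divergence (a b : ℝ) (ha : ∀ l : ℤ, a ≠ l * π) :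
    ¬ Summable (fun k : ℕ => |Real.cos (a * k + b)| / ((k : ℝ) + 1)) := by
  have hsin : sin a ≠ 0 := by
    rw [Ne, sin_eq_zero_iff]
    rintro ⟨l, hl⟩
    exact ha l hl.symm
  refine not_summable_of_div_le_add_succ (abs_pos.2 hsin) fun k => ?_
  have hnext : a * ((k + 1 : ℕ) : ℝ) + b = (a * k + b) + a := by push_cast; ring
  calc |sin a| / ((k : ℝ) + 2)
      ≤ (|cos (a * k + b)| + |cos ((a * k + b) + a)|) / ((k : ℝ) + 2) := by
        gcongr; exact abs_sin_le_abs_cos_add_abs_cos_add a _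
    _ = |cos (a * k + b)| / ((k : ℝ) + 2)
          + |cos (a * ((k + 1 : ℕ) : ℝ) + b)| / ((k + 1 : ℕ) + 1) := by
        rw [add_div, hnext]; push_cast; ring
    _ ≤ |cos (a * k + b)| / ((k : ℝ) + 1)
          + |cos (a * ((k + 1 : ℕ) : ℝ) + b)| / ((k + 1 : ℕ) + 1) := by
        gcongr; linarith
end

section
/- Let d ≥ 1 and ω_1, …, ω_d ≥ 0 be real numbers. Then the series ∑_{n ∈ ℕ^d} (∏_{s=1}^d (n_s+1)^{ω_s}) / (n_1 + … + n_d + 1)^{d + ω_1 + … + ω_d} diverges. -/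
/-! Write `|ω| = ∑ ω_s`. On the box `[N, 2N)^d` every term is at least `N^|ω| / (2dN)^(d + |ω|)`
and the box has `N^d` points, so it contributes at least `(2d)^-(d + |ω|)`, independently of `N`.
The boxes with `N = 2^k` are pairwise disjoint, hence the partial sums are unbounded. -/

open Finset Function

theorem not_summable_of_le_sum_pairwiseDisjoint {α : Type*} {f : α → ℝ} (hf : ∀ a, 0 ≤ f a)
    {B : ℕ → Finset α} (hB : Pairwise (Disjoint on B)) {c : ℝ} (hc : 0 < c)
    (hblock : ∀ k, c ≤ ∑ a ∈ B k, f a) : ¬ Summable f := by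
  classical
  intro hs
  obtain ⟨K, hK⟩ := exists_nat_gt ((∑' a, f a) / c)
  have hbound : (K : ℝ) * c ≤ ∑' a, f a := calc
    (K : ℝ) * c = ∑ _k ∈ range K, c := by simp
    _ ≤ ∑ k ∈ range K, ∑ a ∈ B k, f a := sum_le_sum fun k _ => hblock k
    _ = ∑ a ∈ (range K).biUnion B, f a := (sum_biUnion (hB.set_pairwise _)).symm
    _ ≤ ∑' a, f a := hs.sum_le_tsum _ fun a _ => hf a
  rw [div_lt_iff₀ hc] at hK
  linarith

section DyadicBox

variable (ι : Type*) [Fintype ι] [DecidableEq ι]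

def dyadicBox (N : ℕ) : Finset (ι → ℕ) :=
  Fintype.piFinset fun _ => Ico N (2 * N)

variable {ι}

theorem mem_dyadicBox {N : ℕ} {n : ι → ℕ} : n ∈ dyadicBox ι N ↔ ∀ s, N ≤ n s ∧ n s < 2 * N := by
  simp [dyadicBox]

theorem card_dyadicBox (N : ℕ) : (dyadicBox ι N).card = N ^ Fintype.card ι := by
  simp [dyadicBox, two_mul]

theorem disjoint_dyadicBox [Nonempty ι] {M N : ℕ} (h : 2 * M ≤ N) :
    Disjoint (dyadicBox ι M) (dyadicBox ι N) := by
  refine disjoint_left.mpr fun n hM hN => ?_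
  obtain ⟨i⟩ := ‹Nonempty ι›
  have hMi := mem_dyadicBox.mp hM i
  have hNi := mem_dyadicBox.mp hN i
  omega

theorem pairwise_disjoint_dyadicBox_two_pow [Nonempty ι] :
    Pairwise (Disjoint on fun k : ℕ => dyadicBox ι (2 ^ k)) := by
  refine (pairwise_disjoint_on _).mpr fun j k h => disjoint_dyadicBox ?_
  rw [← pow_succ']
  exact Nat.pow_le_pow_right two_pos h

theorem sum_add_one_le_of_mem_dyadicBox [Nonempty ι] {N : ℕ} {n : ι → ℕ}
    (hn : n ∈ dyadicBox ι N) : ∑ s, n s + 1 ≤ 2 * Fintype.card ι * N := calc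
  ∑ s, n s + 1 ≤ ∑ s, (n s + 1) := by
    rw [sum_add_distrib, sum_const, card_univ, smul_eq_mul, mul_one]
    exact Nat.add_le_add_left Fintype.card_pos _
  _ ≤ ∑ _s : ι, 2 * N := sum_le_sum fun s _ => (mem_dyadicBox.mp hn s).2
  _ = 2 * Fintype.card ι * N := by simp [card_univ]; ring

end DyadicBox

section WeightedTerm

variable {ι : Type*} [Fintype ι] (ω : ι → ℝ)

noncomputable def weightedTerm (n : ι → ℕ) : ℝ :=
  (∏ s, ((n s : ℝ) + 1) ^ ω s) / ((∑ s, (n s : ℝ)) + 1) ^ ((Fintype.card ι : ℝ) + ∑ s, ω s)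

theorem weightedTerm_nonneg (n : ι → ℕ) : 0 ≤ weightedTerm ω n := by
  unfold weightedTerm
  positivity

variable {ω} [DecidableEq ι] [Nonempty ι]

theorem div_le_weightedTerm_of_mem_dyadicBox (hω : ∀ s, 0 ≤ ω s) {N : ℕ} {n : ι → ℕ}
    (hn : n ∈ dyadicBox ι N) :
    (N : ℝ) ^ (∑ s, ω s) / (2 * Fintype.card ι * N : ℝ) ^ ((Fintype.card ι : ℝ) + ∑ s, ω s)
      ≤ weightedTerm ω n := by
  have hN : (0 : ℝ) < N := by
    obtain ⟨i⟩ := ‹Nonempty ι›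
    have := mem_dyadicBox.mp hn i
    exact_mod_cast (show 0 < N by omega)
  have hnum : (N : ℝ) ^ (∑ s, ω s) ≤ ∏ s, ((n s : ℝ) + 1) ^ ω s := by
    rw [Real.rpow_sum_of_pos hN]
    refine prod_le_prod (fun s _ => by positivity) fun s _ => ?_
    have : (N : ℝ) ≤ n s := by exact_mod_cast (mem_dyadicBox.mp hn s).1
    exact Real.rpow_le_rpow hN.le (by linarith) (hω s)
  have hden : (∑ s, (n s : ℝ)) + 1 ≤ 2 * Fintype.card ι * N := by
    exact_mod_cast sum_add_one_le_of_mem_dyadicBox hn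
  have he : 0 ≤ (Fintype.card ι : ℝ) + ∑ s, ω s := by
    have := sum_nonneg fun s (_ : s ∈ univ) => hω s
    positivity
  unfold weightedTerm
  gcongr

theorem inv_le_sum_weightedTerm_dyadicBox (hω : ∀ s, 0 ≤ ω s) {N : ℕ} (hN : 0 < N) :
    ((2 * Fintype.card ι : ℝ) ^ ((Fintype.card ι : ℝ) + ∑ s, ω s))⁻¹
      ≤ ∑ n ∈ dyadicBox ι N, weightedTerm ω n := by
  have hN' : (0 : ℝ) < N := by exact_mod_cast hN
  calc ((2 * Fintype.card ι : ℝ) ^ ((Fintype.card ι : ℝ) + ∑ s, ω s))⁻¹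
      = (dyadicBox ι N).card * ((N : ℝ) ^ (∑ s, ω s) /
          (2 * Fintype.card ι * N : ℝ) ^ ((Fintype.card ι : ℝ) + ∑ s, ω s)) := by
        rw [card_dyadicBox, Real.mul_rpow (by positivity) hN'.le, Real.rpow_add hN',
          Real.rpow_natCast]
        push_cast
        field_simp
    _ ≤ ∑ n ∈ dyadicBox ι N, weightedTerm ω n := by
        rw [← nsmul_eq_mul]
        exact card_nsmul_le_sum _ _ _ fun n hn => div_le_weightedTerm_of_mem_dyadicBox hω hn

theorem not_summable_weightedTerm (hω : ∀ s, 0 ≤ ω s) : ¬ Summable (weightedTerm ω) :=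
  not_summable_of_le_sum_pairwiseDisjoint (weightedTerm_nonneg ω)
    pairwise_disjoint_dyadicBox_two_pow (by positivity)
    fun k => inv_le_sum_weightedTerm_dyadicBox hω (pow_pos two_pos k)

end WeightedTerm

theorem multi_series_divergence (d : ℕ) (hd : 1 ≤ d) (ω : Fin d → ℝ) (hω : ∀ s, 0 ≤ ω s) :
    ¬ Summable (fun n : Fin d → ℕ =>
      (∏ s, ((n s : ℝ) + 1) ^ (ω s)) /
        ((∑ s, (n s : ℝ)) + 1) ^ ((d : ℝ) + ∑ s, ω s)) := by
  have : Nonempty (Fin d) := ⟨⟨0, hd⟩⟩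
  have h : ¬ Summable fun n => weightedTerm ω n := not_summable_weightedTerm hω
  simpa only [weightedTerm, Fintype.card_fin] using h
end

section
/- Let d ≥ 2, and let ω_d < 0 be real while ω_1, …, ω_{d-1} are arbitrary reals. If the series ∑_{n' ∈ ℕ^{d-1}} (∏_{s=1}^{d-1}(n_s+1)^{ω_s}) / (n_1+…+n_{d-1}+1)^{(d-1) + ω_1 + … + ω_{d-1}} diverges, then the series ∑_{n ∈ ℕ^d} (∏_{s=1}^{d}(n_s+1)^{ω_s}) / (n_1+…+n_d+1)^{d + ω_1 + … + ω_d} diverges. -/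
/-!
Write a point of `ℕ^d` as `(n', k)` with `k` the last coordinate and `N = ∑ n'`. Since
`ω_d ≤ 0`, `(k + 1)^ω_d ≥ (N + k + 1)^ω_d`, so the `d`-dimensional term at `(n', k)` is at least
`P(n') (N + k + 1)^(-τ)`, where `P(n') = ∏ (n'_s + 1)^ω_s` and `τ = d + ω_1 + … + ω_{d-1}`.
Summability over the fibre `n' = 0` forces `τ > 1`, and then the sum over `k` is at least
`2^(-τ) P(n') (N + 1)^(1 - τ)`, a multiple of the `(d-1)`-dimensional term. So summability in
dimension `d` gives summability in dimension `d - 1`.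
-/

open Finset

noncomputable def latticeTerm {d : ℕ} (ω : Fin d → ℝ) (n : Fin d → ℕ) : ℝ :=
  (∏ s, ((n s : ℝ) + 1) ^ ω s) / ((∑ s, (n s : ℝ)) + 1) ^ ((d : ℝ) + ∑ s, ω s)

lemma latticeTerm_nonneg {d : ℕ} (ω : Fin d → ℝ) (n : Fin d → ℕ) : 0 ≤ latticeTerm ω n := by
  unfold latticeTerm
  positivity

lemma summable_nat_add_rpow_neg_iff {a τ : ℝ} (ha : 0 ≤ a) :
    Summable (fun k : ℕ => ((k : ℝ) + a) ^ (-τ)) ↔ 1 < τ := by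
  rw [← Real.summable_one_div_nat_add_rpow a τ]
  refine summable_congr fun k => ?_
  rw [abs_of_nonneg (by positivity), Real.rpow_neg (by positivity), one_div]

lemma rpow_neg_le_rpow_div_rpow_add {a b σ : ℝ} (τ : ℝ) (ha : 0 < a) (hab : a ≤ b)
    (hσ : σ ≤ 0) : b ^ (-τ) ≤ a ^ σ / b ^ (τ + σ) := by
  have hb : 0 < b := ha.trans_le hab
  rw [show -τ = σ - (τ + σ) by ring, Real.rpow_sub hb]
  exact div_le_div_of_nonneg_right (Real.rpow_le_rpow_of_nonpos ha hab hσ) (by positivity)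

/-- A crude form of `∑ₖ (k + K)^(-τ) ≥ K^(1-τ)/(τ-1)`: the first `K` terms are each at least
`(2K)^(-τ)`, and the constant is irrelevant for summability. -/
lemma rpow_one_sub_le_two_rpow_mul_tsum (N : ℕ) {τ : ℝ} (hτ : 1 < τ) :
    ((N : ℝ) + 1) ^ (1 - τ) ≤ 2 ^ τ * ∑' k : ℕ, ((k : ℝ) + (N + 1)) ^ (-τ) := by
  have hK : (0 : ℝ) < N + 1 := by positivity
  calc ((N : ℝ) + 1) ^ (1 - τ)
      = 2 ^ τ * ∑ _k ∈ range (N + 1), (2 * ((N : ℝ) + 1)) ^ (-τ) := by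
        rw [sum_const, card_range, nsmul_eq_mul, Real.mul_rpow zero_le_two hK.le,
          Real.rpow_sub hK, Real.rpow_one, Real.rpow_neg zero_le_two, Real.rpow_neg hK.le]
        push_cast
        field_simp
    _ ≤ 2 ^ τ * ∑ k ∈ range (N + 1), ((k : ℝ) + (N + 1)) ^ (-τ) := by
        refine mul_le_mul_of_nonneg_left (sum_le_sum fun k hk => ?_) (by positivity)
        have hkN : (k : ℝ) ≤ N := by exact_mod_cast Nat.lt_succ_iff.mp (mem_range.mp hk)
        exact Real.rpow_le_rpow_of_nonpos (by positivity) (by linarith) (by linarith)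
    _ ≤ 2 ^ τ * ∑' k : ℕ, ((k : ℝ) + (N + 1)) ^ (-τ) := by
        gcongr
        exact ((summable_nat_add_rpow_neg_iff hK.le).2 hτ).sum_le_tsum _
          fun k _ => by positivity

lemma prod_mul_rpow_neg_le_latticeTerm_snoc {m : ℕ} (ω : Fin (m + 1) → ℝ)
    (hlast : ω (Fin.last m) ≤ 0) (n' : Fin m → ℕ) (k : ℕ) :
    (∏ s, ((n' s : ℝ) + 1) ^ ω (Fin.castSucc s)) *
        ((k : ℝ) + ((∑ s, (n' s : ℝ)) + 1)) ^ (-((m : ℝ) + 1 + ∑ s, ω (Fin.castSucc s))) ≤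
      latticeTerm ω (Fin.snoc n' k) := by
  simp only [latticeTerm, Fin.prod_univ_castSucc, Fin.sum_univ_castSucc, Fin.snoc_castSucc,
    Fin.snoc_last]
  rw [mul_div_assoc]
  gcongr
  have hb : (k : ℝ) + 1 ≤ k + ((∑ s, (n' s : ℝ)) + 1) := by
    have : 0 ≤ ∑ s, (n' s : ℝ) := by positivity
    linarith
  refine (rpow_neg_le_rpow_div_rpow_add _ (by positivity) hb hlast).trans_eq ?_
  congr 2 <;> push_cast <;> ring

theorem summable_latticeTerm_castSucc {m : ℕ} (ω : Fin (m + 1) → ℝ) (hlast : ω (Fin.last m) ≤ 0)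
    (hsum : Summable (latticeTerm ω)) : Summable (latticeTerm fun s => ω (Fin.castSucc s)) := by
  set τ : ℝ := (m : ℝ) + 1 + ∑ s, ω (Fin.castSucc s)
  set P : (Fin m → ℕ) → ℝ := fun n' => ∏ s, ((n' s : ℝ) + 1) ^ ω (Fin.castSucc s)
  set G : (Fin m → ℕ) × ℕ → ℝ := fun p => latticeTerm ω (Fin.snoc p.1 p.2)
  have hG : Summable G :=
    hsum.comp_injective ((Equiv.prodComm _ _).trans (Fin.snocEquiv fun _ => ℕ)).injective
  obtain ⟨hfiber, htsum⟩ := (summable_prod_of_nonneg fun p => latticeTerm_nonneg ω _).1 hG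
  have hτ : 1 < τ := by
    refine (summable_nat_add_rpow_neg_iff zero_le_one).1 ((hfiber 0).of_nonneg_of_le
      (fun k => by positivity) fun k => ?_)
    simpa only [Pi.zero_apply, Nat.cast_zero, zero_add, Real.one_rpow, prod_const_one, one_mul,
      sum_const_zero] using prod_mul_rpow_neg_le_latticeTerm_snoc ω hlast 0 k
  refine (htsum.mul_left (2 ^ τ)).of_nonneg_of_le (latticeTerm_nonneg _) fun n' => ?_
  obtain ⟨N, hN⟩ : ∃ N : ℕ, ∑ s, (n' s : ℝ) = N := ⟨∑ s, n' s, by push_cast; rfl⟩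
  calc latticeTerm _ n' = P n' * ((N : ℝ) + 1) ^ (1 - τ) := by
        rw [latticeTerm, hN, div_eq_mul_inv, ← Real.rpow_neg (by positivity)]
        congr 2
        ring
    _ ≤ P n' * (2 ^ τ * ∑' k : ℕ, ((k : ℝ) + (N + 1)) ^ (-τ)) := by
        gcongr
        exact rpow_one_sub_le_two_rpow_mul_tsum N hτ
    _ = 2 ^ τ * ∑' k : ℕ, P n' * ((k : ℝ) + (N + 1)) ^ (-τ) := by
        rw [tsum_mul_left]
        ring
    _ ≤ 2 ^ τ * ∑' k, G (n', k) := by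
        refine mul_le_mul_of_nonneg_left (Summable.tsum_le_tsum (fun k => ?_)
          (((summable_nat_add_rpow_neg_iff (by positivity)).2 hτ).mul_left _) (hfiber n'))
          (by positivity)
        simpa only [← hN] using prod_mul_rpow_neg_le_latticeTerm_snoc ω hlast n' k

theorem multi_series_divergence_inductive_step (d : ℕ) (hd : 2 ≤ d) (ω : Fin d → ℝ)
    (hneg : ω ⟨d - 1, Nat.sub_lt (by omega) one_pos⟩ < 0)
    (hdiv : ¬ Summable (fun n' : Fin (d - 1) → ℕ =>
      (∏ s, ((n' s : ℝ) + 1) ^ (ω (Fin.castLE (Nat.sub_le d 1) s))) /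
        ((∑ s, (n' s : ℝ)) + 1) ^ (((d : ℝ) - 1) + ∑ s, ω (Fin.castLE (Nat.sub_le d 1) s)))) :
    ¬ Summable (fun n : Fin d → ℕ =>
      (∏ s, ((n s : ℝ) + 1) ^ (ω s)) /
        ((∑ s, (n s : ℝ)) + 1) ^ ((d : ℝ) + ∑ s, ω s)) := by
  obtain ⟨m, rfl⟩ : ∃ m, d = m + 1 := ⟨d - 1, by omega⟩
  have hexp : ((m + 1 : ℕ) : ℝ) - 1 = m := by push_cast; ring
  simp only [hexp] at hdiv
  exact fun hsum => hdiv (summable_latticeTerm_castSucc ω hneg.le hsum)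
end

section
/- For Jacobi parameters α, β > −1, |c_k^{α,β} k^{−1/2} − √2| ≲ k^{−1} uniformly in positive integers k, where c_k^{α,β} = ((2k+α+β+1) Γ(k+α+β+1) Γ(k+1) / (Γ(k+α+1) Γ(k+β+1)))^{1/2}. -/
/-!
Log-convexity of `Γ` traps the slope of `log Γ` on `[x, x + b]` (for `b ≥ 0`) between
`log (x - 1)` and `log (x + b)`, which gives Wendel's estimate
`log Γ (x + b) - log Γ x = b log x + O(1/x)`. Applied at the base point `k + 1` with the shifts
`α + β`, `α` and `β`, the main terms cancel, so the Gamma quotient in `c_k²` is `1 + O(1/k)`;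
hence `c_k² / k = 2 + O(1/k)`, and taking square roots gives the claim.
-/

open Real

/-- The normalizing constant `c_k^{α,β}` of the Jacobi trigonometric polynomials. -/
noncomputable def jacobiNormConst (α β : ℝ) (k : ℕ) : ℝ :=
  Real.sqrt
    ((2 * k + α + β + 1) * Real.Gamma (k + α + β + 1) * Real.Gamma (k + 1) /
      (Real.Gamma (k + α + 1) * Real.Gamma (k + β + 1)))

open Filter Topology Asymptotics

lemma HasDerivAt.isBigO_comp_sub {f : ℝ → ℝ} {f' a : ℝ} (hf : HasDerivAt f f' a)
    {ι : Type*} {l : Filter ι} {g : ι → ℝ} (hg : Tendsto g l (𝓝 a)) :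
    (fun i => f (g i) - f a) =O[l] (fun i => g i - a) :=
  hf.isBigO_sub.comp_tendsto hg

namespace Real

lemma log_Gamma_add_one {x : ℝ} (hx : 0 < x) :
    log (Gamma (x + 1)) = log x + log (Gamma x) := by
  rw [Gamma_add_one hx.ne', log_mul hx.ne' (Gamma_pos_of_pos hx).ne']

lemma log_Gamma_sub_log_Gamma_le {u v : ℝ} (hu : 0 < u) (huv : u ≤ v) :
    log (Gamma v) - log (Gamma u) ≤ (v - u) * log v := by
  rcases huv.eq_or_lt with rfl | huv
  · simp
  have hv : 0 < v := hu.trans huv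
  have h := convexOn_log_Gamma.slope_mono_adjacent hu (Set.mem_Ioi.2 (by linarith : 0 < v + 1))
    huv (lt_add_one v)
  simp only [Function.comp_apply, log_Gamma_add_one hv, add_sub_cancel_left, add_sub_cancel_right,
    div_one] at h
  rwa [div_le_iff₀ (sub_pos.2 huv), mul_comm] at h

lemma mul_log_sub_one_le_log_Gamma_sub_log_Gamma {u v : ℝ} (hu : 1 < u) (huv : u ≤ v) :
    (v - u) * log (u - 1) ≤ log (Gamma v) - log (Gamma u) := by
  rcases huv.eq_or_lt with rfl | huv
  · simp
  have hu' : 0 < u - 1 := by linarith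
  have h := convexOn_log_Gamma.slope_mono_adjacent hu' (Set.mem_Ioi.2 (by linarith : 0 < v))
    (sub_one_lt u) huv
  have hstep : log (Gamma u) - log (Gamma (u - 1)) = log (u - 1) := by
    have := log_Gamma_add_one hu'
    rw [sub_add_cancel] at this
    linarith
  simp only [Function.comp_apply, hstep, sub_sub_cancel, div_one] at h
  rwa [le_div_iff₀ (sub_pos.2 huv), mul_comm] at h

lemma abs_log_Gamma_sub_log_Gamma_sub_mul_log_le {u v w : ℝ} (hu : 1 < u) (huv : u ≤ v)
    (hw : u - 1 ≤ w) (hwv : w ≤ v) :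
    |log (Gamma v) - log (Gamma u) - (v - u) * log w| ≤ (v - u) * (v - u + 1) / (u - 1) := by
  have hu' : 0 < u - 1 := by linarith
  have hd : 0 ≤ v - u := sub_nonneg.2 huv
  have hlog_w : log (u - 1) ≤ log w := log_le_log hu' hw
  have hlog_v : log w ≤ log v := log_le_log (hu'.trans_le hw) hwv
  have hlog_ratio : log v - log (u - 1) ≤ (v - u + 1) / (u - 1) := by
    rw [← log_div (by linarith) hu'.ne']
    calc log (v / (u - 1)) ≤ v / (u - 1) - 1 := log_le_sub_one_of_pos (div_pos (by linarith) hu')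
      _ = (v - u + 1) / (u - 1) := by field_simp; ring
  have hup := log_Gamma_sub_log_Gamma_le (by linarith) huv
  have hlow := mul_log_sub_one_le_log_Gamma_sub_log_Gamma hu huv
  calc |log (Gamma v) - log (Gamma u) - (v - u) * log w|
      ≤ (v - u) * (log v - log (u - 1)) := by
        rw [abs_le]; constructor <;> nlinarith
    _ ≤ (v - u) * (v - u + 1) / (u - 1) := by
        rw [mul_div_assoc]; exact mul_le_mul_of_nonneg_left hlog_ratio hd

lemma abs_log_Gamma_add_sub_log_Gamma_sub_mul_log_le (b : ℝ) {x : ℝ}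
    (hx : 2 * (|b| + 1) ≤ x) :
    |log (Gamma (x + b)) - log (Gamma x) - b * log x| ≤ 2 * |b| * (|b| + 1) / x := by
  have hx2 : 2 ≤ x := by linarith [abs_nonneg b]
  rcases le_or_gt 0 b with hb | hb
  · have h := abs_log_Gamma_sub_log_Gamma_sub_mul_log_le (u := x) (v := x + b) (w := x)
      (by linarith) (by linarith) (by linarith) (by linarith)
    rw [add_sub_cancel_left] at h
    rw [abs_of_nonneg hb]
    calc _ ≤ b * (b + 1) / (x - 1) := h
      _ ≤ b * (b + 1) / (x / 2) := by
        gcongr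
        linarith [abs_of_nonneg hb]
      _ = 2 * b * (b + 1) / x := by ring
  · have h := abs_log_Gamma_sub_log_Gamma_sub_mul_log_le (u := x + b) (v := x) (w := x)
      (by linarith [abs_of_neg hb]) (by linarith) (by linarith) le_rfl
    rw [show x - (x + b) = -b by ring] at h
    rw [abs_of_neg hb, ← abs_neg]
    calc _ = |log (Gamma x) - log (Gamma (x + b)) - -b * log x| := by ring_nf
      _ ≤ -b * (-b + 1) / (x + b - 1) := h
      _ ≤ -b * (-b + 1) / (x / 2) := by
        gcongr
        · nlinarith
        · linarith [abs_of_neg hb]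
      _ = 2 * -b * (-b + 1) / x := by ring

lemma isBigO_log_Gamma_add_sub_log_Gamma_sub_mul_log (b : ℝ) :
    (fun x => log (Gamma (x + b)) - log (Gamma x) - b * log x) =O[atTop] (fun x => x⁻¹) := by
  refine IsBigO.of_bound (2 * |b| * (|b| + 1)) ?_
  filter_upwards [eventually_ge_atTop (2 * (|b| + 1))] with x hx
  have hx0 : 0 < x := by linarith [abs_nonneg b]
  rw [norm_inv, norm_of_nonneg hx0.le, ← div_eq_mul_inv, norm_eq_abs]
  exact abs_log_Gamma_add_sub_log_Gamma_sub_mul_log_le b hx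

end Real

lemma eventually_pos_Gamma_args (α β : ℝ) :
    ∀ᶠ x in atTop, 0 < x + α + β + 1 ∧ 0 < x + 1 ∧ 0 < x + α + 1 ∧ 0 < x + β + 1 := by
  filter_upwards [eventually_gt_atTop (|α| + |β|)] with x hx
  refine ⟨?_, ?_, ?_, ?_⟩ <;>
    linarith [neg_abs_le α, neg_abs_le β, abs_nonneg α, abs_nonneg β]

noncomputable def gammaRatio (α β x : ℝ) : ℝ :=
  Gamma (x + α + β + 1) * Gamma (x + 1) / (Gamma (x + α + 1) * Gamma (x + β + 1))

lemma isBigO_log_gammaRatio (α β : ℝ) :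
    (fun x => log (gammaRatio α β x)) =O[atTop] (fun x => x⁻¹) := by
  have hshift : (fun x : ℝ => (x + 1)⁻¹) =O[atTop] (fun x => x⁻¹) := by
    refine IsBigO.of_bound 1 ?_
    filter_upwards [eventually_gt_atTop 0] with x hx
    rw [one_mul, norm_inv, norm_inv, norm_of_nonneg hx.le, norm_of_nonneg (by linarith)]
    exact inv_anti₀ hx (by linarith)
  have hW (b : ℝ) : (fun x => log (Gamma (x + 1 + b)) - log (Gamma (x + 1)) - b * log (x + 1))
      =O[atTop] (fun x => x⁻¹) :=
    ((isBigO_log_Gamma_add_sub_log_Gamma_sub_mul_log b).comp_tendsto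
      (tendsto_atTop_add_const_right _ 1 tendsto_id)).trans hshift
  -- the terms `b * log (x + 1)` cancel since `(α + β) - α - β = 0`
  refine (((hW (α + β)).sub (hW α)).sub (hW β)).congr' ?_ EventuallyEq.rfl
  filter_upwards [eventually_pos_Gamma_args α β] with x ⟨h₁, h₂, h₃, h₄⟩
  rw [gammaRatio, log_div (by positivity) (by positivity), log_mul (by positivity) (by positivity),
    log_mul (by positivity) (by positivity)]
  simp only [show x + 1 + (α + β) = x + α + β + 1 by ring, show x + 1 + α = x + α + 1 by ring,
    show x + 1 + β = x + β + 1 by ring]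
  ring

lemma isBigO_gammaRatio_sub_one (α β : ℝ) :
    (fun x => gammaRatio α β x - 1) =O[atTop] (fun x => x⁻¹) := by
  have hlog := isBigO_log_gammaRatio α β
  have hexp : (fun x => exp (log (gammaRatio α β x)) - 1) =O[atTop]
      (fun x => log (gammaRatio α β x)) := by
    simpa using (hasDerivAt_exp 0).isBigO_comp_sub (hlog.trans_tendsto tendsto_inv_atTop_zero)
  refine (hexp.trans hlog).congr' ?_ EventuallyEq.rfl
  filter_upwards [eventually_pos_Gamma_args α β] with x ⟨h₁, h₂, h₃, h₄⟩
  rw [exp_log (by unfold gammaRatio; positivity)]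

lemma isBigO_mul_gammaRatio_div_sub_two (α β : ℝ) :
    (fun x => (2 * x + α + β + 1) * gammaRatio α β x / x - 2) =O[atTop] (fun x => x⁻¹) := by
  have hR := isBigO_gammaRatio_sub_one α β
  have hR1 : (fun x => gammaRatio α β x) =O[atTop] (fun _ => (1 : ℝ)) := by
    simpa using ((hR.trans_tendsto tendsto_inv_atTop_zero).add_const 1).isBigO_one ℝ
  have hRx : (fun x => (α + β + 1) * gammaRatio α β x * x⁻¹) =O[atTop] (·⁻¹) := by
    simpa only [one_mul] using (hR1.const_mul_left _).mul (isBigO_refl (·⁻¹) atTop)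
  refine ((hR.const_mul_left 2).add hRx).congr' ?_ EventuallyEq.rfl
  filter_upwards [eventually_ne_atTop 0] with x hx
  field_simp
  ring

lemma isBigO_sqrt_mul_gammaRatio_div_sub_sqrt_two (α β : ℝ) :
    (fun x => √((2 * x + α + β + 1) * gammaRatio α β x / x) - √2) =O[atTop]
      (fun x => x⁻¹) := by
  have hY := isBigO_mul_gammaRatio_div_sub_two α β
  have hlim : Tendsto (fun x => (2 * x + α + β + 1) * gammaRatio α β x / x) atTop (𝓝 2) := by
    simpa using (hY.trans_tendsto tendsto_inv_atTop_zero).add_const 2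
  exact ((hasDerivAt_sqrt two_ne_zero).isBigO_comp_sub hlim).trans hY

lemma jacobiNormConst_mul_rpow_neg_half (α β : ℝ) (k : ℕ) :
    jacobiNormConst α β k * (k : ℝ) ^ (-(1 : ℝ) / 2) =
      √((2 * k + α + β + 1) * gammaRatio α β k / k) := by
  rw [jacobiNormConst, neg_div, rpow_neg (Nat.cast_nonneg k), ← sqrt_eq_rpow, ← div_eq_mul_inv,
    ← sqrt_div' _ (Nat.cast_nonneg k), gammaRatio, mul_assoc, mul_div_assoc]

lemma exists_pos_abs_le_div_of_isBigO_inv {f : ℕ → ℝ}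
    (hf : f =O[atTop] (fun k => (k : ℝ)⁻¹)) :
    ∃ C > 0, ∀ k : ℕ, 1 ≤ k → |f k| ≤ C / k := by
  obtain ⟨C, hC, hbound⟩ := bound_of_isBigO_nat_atTop hf
  refine ⟨C, hC, fun k hk => ?_⟩
  have hk0 : (0 : ℝ) < k := by exact_mod_cast hk
  simpa [abs_of_pos hk0, div_eq_mul_inv] using hbound (inv_ne_zero hk0.ne')

theorem jacobiNormConst_stirling_general (α β : ℝ) :
    ∃ C > 0, ∀ k : ℕ, 1 ≤ k →
      |jacobiNormConst α β k * (k : ℝ) ^ (-(1 : ℝ) / 2) - Real.sqrt 2| ≤ C / k := by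
  simp_rw [jacobiNormConst_mul_rpow_neg_half]
  exact exists_pos_abs_le_div_of_isBigO_inv
    (isBigO_sqrt_mul_gammaRatio_div_sub_sqrt_two α β).natCast_atTop

theorem jacobiNormConst_stirling (α β : ℝ) (hα : -1 < α) (hβ : -1 < β) :
    ∃ C > 0, ∀ k : ℕ, 1 ≤ k →
      |jacobiNormConst α β k * (k : ℝ) ^ (-(1 : ℝ) / 2) - Real.sqrt 2| ≤ C / k :=
  jacobiNormConst_stirling_general α β
end

section
/- For α, β ≥ −1/2, the Jacobi trigonometric functions φ_k^{α,β}(θ) = (sin(θ/2))^{α+1/2}(cos(θ/2))^{β+1/2} 𝒫_k^{α,β}(θ) satisfy |φ_k^{α,β}(θ) − φ_k^{α,β}(θ')| ≲ (k+1)^{max(α,β)+1/2} ((k+1)|θ−θ'| + |θ−θ'|^{α+1/2} + |θ−θ'|^{β+1/2}) uniformly in θ, θ' ∈ (0,π) and k ∈ ℕ, assuming the bounds |𝒫_k^{α,β}(θ)| ≲ (k+1)^{max(α,β)+1/2} and |(d/dθ)𝒫_k^{α,β}(θ)| ≲ (k+1)^{max(α,β)+3/2}. -/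
/-!
With `s = sin (θ / 2)` and `c = cos (θ / 2)`, split the difference of the products `s^a c^b P` as
`s^a c^b (P θ - P θ') + (s^a - s'^a) c^b P θ' + s'^a (c^b - c'^b) P θ'`.
The first term is controlled by the mean value theorem and the derivative bound, which costs one
extra factor `k + 1`. For the other two, `t ↦ t^p` on `[0, 1]` is Hölder of exponent `p` when `p ≤ 1`
(subadditivity of `t^p`) and `p`-Lipschitz when `p ≥ 1`, while `sin` and `cos` are 1-Lipschitz.
-/

open Real Set

lemma abs_rpow_sub_rpow_le_abs_sub_rpow {u v p : ℝ} (hu : 0 ≤ u) (hv : 0 ≤ v) (hp : 0 ≤ p)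
    (hp1 : p ≤ 1) : |u ^ p - v ^ p| ≤ |u - v| ^ p := by
  wlog hvu : v ≤ u generalizing u v
  · rw [abs_sub_comm, abs_sub_comm u]
    exact this hv hu (le_of_not_ge hvu)
  have hsub := rpow_add_le_add_rpow hv (sub_nonneg.2 hvu) hp hp1
  rw [add_sub_cancel] at hsub
  rw [abs_of_nonneg (sub_nonneg.2 (rpow_le_rpow hv hvu hp)), abs_of_nonneg (sub_nonneg.2 hvu)]
  linarith

lemma abs_rpow_sub_rpow_le_mul_abs_sub {u v p : ℝ} (hu : u ∈ Icc (0 : ℝ) 1)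
    (hv : v ∈ Icc (0 : ℝ) 1) (hp : 1 ≤ p) : |u ^ p - v ^ p| ≤ p * |u - v| := by
  have hderiv_le : ∀ x ∈ Icc (0 : ℝ) 1, ‖p * x ^ (p - 1)‖ ≤ p := fun x hx => by
    rw [norm_mul, norm_of_nonneg (by linarith), norm_of_nonneg (rpow_nonneg hx.1 _)]
    exact mul_le_of_le_one_right (by linarith) (rpow_le_one hx.1 hx.2 (by linarith))
  simpa only [norm_eq_abs] using (convex_Icc 0 1).norm_image_sub_le_of_norm_hasDerivWithin_le
    (fun x _ => (hasDerivAt_rpow_const (Or.inr hp)).hasDerivWithinAt) hderiv_le hv hu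

lemma abs_rpow_sub_rpow_le {u v p t : ℝ} (hu : u ∈ Icc (0 : ℝ) 1) (hv : v ∈ Icc (0 : ℝ) 1)
    (hp : 0 ≤ p) (huv : |u - v| ≤ t) : |u ^ p - v ^ p| ≤ p * t + t ^ p := by
  have ht : 0 ≤ t := (abs_nonneg _).trans huv
  rcases le_total p 1 with hp1 | hp1
  · calc |u ^ p - v ^ p| ≤ |u - v| ^ p := abs_rpow_sub_rpow_le_abs_sub_rpow hu.1 hv.1 hp hp1
      _ ≤ t ^ p := rpow_le_rpow (abs_nonneg _) huv hp
      _ ≤ p * t + t ^ p := le_add_of_nonneg_left (by positivity)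
  · calc |u ^ p - v ^ p| ≤ p * |u - v| := abs_rpow_sub_rpow_le_mul_abs_sub hu hv hp1
      _ ≤ p * t := by gcongr
      _ ≤ p * t + t ^ p := le_add_of_nonneg_right (by positivity)

lemma abs_mul_mul_sub_mul_mul_le {x y z x' y' z' : ℝ} (hx : |x| ≤ 1) (hy : |y| ≤ 1)
    (hx' : |x'| ≤ 1) :
    |x * y * z - x' * y' * z'| ≤ |z - z'| + (|x - x'| + |y - y'|) * |z'| := by
  have hxy : |x * y| ≤ 1 := by rw [abs_mul]; exact mul_le_one₀ hx (abs_nonneg _) hy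
  calc |x * y * z - x' * y' * z'|
      = |x * y * (z - z') + (x - x') * y * z' + x' * (y - y') * z'| := by ring_nf
    _ ≤ |x * y| * |z - z'| + |x - x'| * |y| * |z'| + |x'| * |y - y'| * |z'| := by
      refine (abs_add_three _ _ _).trans ?_
      simp only [abs_mul, le_refl]
    _ ≤ 1 * |z - z'| + |x - x'| * 1 * |z'| + 1 * |y - y'| * |z'| := by gcongr
    _ = |z - z'| + (|x - x'| + |y - y'|) * |z'| := by ring

lemma abs_rpow_le_one_of_mem_Icc {x p : ℝ} (hx : x ∈ Icc (0 : ℝ) 1) (hp : 0 ≤ p) :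
    |x ^ p| ≤ 1 := by
  rw [abs_of_nonneg (rpow_nonneg hx.1 _)]
  exact rpow_le_one hx.1 hx.2 hp

lemma sin_half_mem_Icc {θ : ℝ} (hθ : θ ∈ Ioo 0 π) : sin (θ / 2) ∈ Icc (0 : ℝ) 1 :=
  ⟨sin_nonneg_of_nonneg_of_le_pi (by linarith [hθ.1]) (by linarith [hθ.2, pi_pos]),
    sin_le_one _⟩

lemma cos_half_mem_Icc {θ : ℝ} (hθ : θ ∈ Ioo 0 π) : cos (θ / 2) ∈ Icc (0 : ℝ) 1 :=
  ⟨cos_nonneg_of_mem_Icc ⟨by linarith [hθ.1, pi_pos], by linarith [hθ.2]⟩, cos_le_one _⟩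

lemma abs_half_sub_half_le (θ θ' : ℝ) : |θ / 2 - θ' / 2| ≤ |θ - θ'| := by
  rw [← sub_div, abs_div, abs_two]
  linarith [abs_nonneg (θ - θ')]

theorem jacobi_fun_diff_estimate (α β : ℝ) (hα : -(1 : ℝ) / 2 ≤ α) (hβ : -(1 : ℝ) / 2 ≤ β)
    (P P' : ℕ → ℝ → ℝ) (C : ℝ) (hC : 0 < C)
    (hderiv : ∀ k : ℕ, ∀ θ ∈ Set.Ioo (0 : ℝ) π, HasDerivAt (P k) (P' k θ) θ)
    (hPbound : ∀ k : ℕ, ∀ θ ∈ Set.Ioo (0 : ℝ) π,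
      |P k θ| ≤ C * ((k : ℝ) + 1) ^ (max α β + 1 / 2))
    (hP'bound : ∀ k : ℕ, ∀ θ ∈ Set.Ioo (0 : ℝ) π,
      |P' k θ| ≤ C * ((k : ℝ) + 1) ^ (max α β + 3 / 2)) :
    ∃ C' > 0, ∀ k : ℕ, ∀ θ ∈ Set.Ioo (0 : ℝ) π, ∀ θ' ∈ Set.Ioo (0 : ℝ) π,
      |Real.sin (θ / 2) ^ (α + 1 / 2) * Real.cos (θ / 2) ^ (β + 1 / 2) * P k θ -
        Real.sin (θ' / 2) ^ (α + 1 / 2) * Real.cos (θ' / 2) ^ (β + 1 / 2) * P k θ'| ≤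
      C' * ((k : ℝ) + 1) ^ (max α β + 1 / 2) *
        (((k : ℝ) + 1) * |θ - θ'| + |θ - θ'| ^ (α + 1 / 2) + |θ - θ'| ^ (β + 1 / 2)) := by
  have ha : 0 ≤ α + 1 / 2 := by linarith
  have hb : 0 ≤ β + 1 / 2 := by linarith
  set a := α + 1 / 2
  set b := β + 1 / 2
  refine ⟨C * (a + b + 1), by positivity, fun k θ hθ θ' hθ' => ?_⟩
  set K := ((k : ℝ) + 1) ^ (max α β + 1 / 2)
  set D := |θ - θ'|
  have hk : 1 ≤ (k : ℝ) + 1 := le_add_of_nonneg_left k.cast_nonneg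
  have hPdiff : |P k θ - P k θ'| ≤ C * K * (((k : ℝ) + 1) * D) := by
    have hexp : ((k : ℝ) + 1) ^ (max α β + 3 / 2) = K * ((k : ℝ) + 1) := by
      rw [← rpow_add_one (by positivity)]; ring_nf
    have := (convex_Ioo 0 π).norm_image_sub_le_of_norm_hasDerivWithin_le
      (fun x hx => (hderiv k x hx).hasDerivWithinAt) (fun x hx => hP'bound k x hx) hθ' hθ
    rw [hexp] at this
    simpa only [norm_eq_abs, mul_assoc] using this
  have hsin := abs_rpow_sub_rpow_le (sin_half_mem_Icc hθ) (sin_half_mem_Icc hθ') ha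
    ((abs_sin_sub_sin_le _ _).trans (abs_half_sub_half_le θ θ'))
  have hcos := abs_rpow_sub_rpow_le (cos_half_mem_Icc hθ) (cos_half_mem_Icc hθ') hb
    ((abs_cos_sub_cos_le _ _).trans (abs_half_sub_half_le θ θ'))
  have hsum : ((k : ℝ) + 1) * D + (a * D + D ^ a + (b * D + D ^ b)) ≤
      (a + b + 1) * (((k : ℝ) + 1) * D + D ^ a + D ^ b) := by
    have hD : D ≤ ((k : ℝ) + 1) * D := le_mul_of_one_le_left (abs_nonneg _) hk
    nlinarith [rpow_nonneg (abs_nonneg (θ - θ')) a, rpow_nonneg (abs_nonneg (θ - θ')) b]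
  calc _ ≤ |P k θ - P k θ'| + (|sin (θ / 2) ^ a - sin (θ' / 2) ^ a| +
          |cos (θ / 2) ^ b - cos (θ' / 2) ^ b|) * |P k θ'| :=
        abs_mul_mul_sub_mul_mul_le (abs_rpow_le_one_of_mem_Icc (sin_half_mem_Icc hθ) ha)
          (abs_rpow_le_one_of_mem_Icc (cos_half_mem_Icc hθ) hb)
          (abs_rpow_le_one_of_mem_Icc (sin_half_mem_Icc hθ') ha)
    _ ≤ C * K * (((k : ℝ) + 1) * D) + (a * D + D ^ a + (b * D + D ^ b)) * (C * K) := by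
        gcongr
        exact hPbound k θ' hθ'
    _ = C * K * (((k : ℝ) + 1) * D + (a * D + D ^ a + (b * D + D ^ b))) := by ring
    _ ≤ C * K * ((a + b + 1) * (((k : ℝ) + 1) * D + D ^ a + D ^ b)) := by gcongr
    _ = C * (a + b + 1) * K * (((k : ℝ) + 1) * D + D ^ a + D ^ b) := by ring
end
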